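/- For every nonzero integer x, ∑_{t=1}^∞ |INF(x,t)| = 1, where INF(x,t) = (1/2)H(x−1,t−1) − (1/2)H(x+1,t−1); equivalently, ∑_{t≥1} |H(x+1,t−1) − H(x,t)| = 1. -/
import Mathlib


/-- Heat kernel of the simple symmetric random walk on ℤ:
`H x t = 2^{-t} * choose t ((t+x)/2)` when `t ≥ 0`, `t ≡ x (mod 2)`, `|x| ≤ t`; else `0`. -/
noncomputable def H (x t : ℤ) : ℝ :=
  if 0 ≤ t ∧ (2 : ℤ) ∣ (t - x) ∧ |x| ≤ t then
    (2 : ℝ) ^ (-t) * (t.toNat.choose ((t + x) / 2).toNat)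
  else 0

/-- Influence of a deterministic right-step compared to a random step. -/
noncomputable def INF (y t : ℤ) : ℝ :=
  if t ≤ 0 then 0 else H (y + 1) (t - 1) - H y t

/-- `t_max y = ⌊(y² - 4)/3⌋ + 2`. -/
def tmax (y : ℤ) : ℤ := Int.fdiv (y ^ 2 - 4) 3 + 2


lemma H_nonneg (y t : ℤ) : 0 ≤ H y t := by
  unfold H; split_ifs
  · positivity
  · exact le_refl 0

lemma H_symm (y t : ℤ) : H (-y) t = H y t := by
  unfold H
  by_cases h : 0 ≤ t ∧ (2 : ℤ) ∣ (t - y) ∧ |y| ≤ t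
  · obtain ⟨h1, ⟨a, ha⟩, h3⟩ := h
    rw [abs_le] at h3
    rw [if_pos, if_pos]
    · have e1 : ((t + -y) / 2).toNat = t.toNat - ((t + y) / 2).toNat := by omega
      have e2 : ((t + y) / 2).toNat ≤ t.toNat := by omega
      rw [e1, Nat.choose_symm e2]
    · exact ⟨h1, ⟨a, by omega⟩, by rw [abs_le] at *; omega⟩
    · refine ⟨h1, ⟨t - a, by omega⟩, by rw [abs_le] at *; omega⟩
  · rw [if_neg, if_neg h]
    intro ⟨h1, ⟨a, ha⟩, h3⟩
    exact h ⟨h1, ⟨a - y, by omega⟩, by rw [abs_le] at *; omega⟩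

lemma two_zpow_shift (t : ℤ) : (2:ℝ) ^ (-(t-1)) = 2 * (2:ℝ) ^ (-t) := by
  rw [show -(t-1) = -t + 1 by ring, zpow_add₀ (two_ne_zero) (-t) 1, zpow_one]; ring

lemma H_rec (y t : ℤ) (ht : 1 ≤ t) : H y t = (H (y-1) (t-1) + H (y+1) (t-1)) / 2 := by
  unfold H
  by_cases hpar : (2:ℤ) ∣ t - y
  case neg =>
    rw [if_neg, if_neg, if_neg]
    · norm_num
    · rintro ⟨h0, ⟨a, ha⟩, h2⟩; exact hpar ⟨a, by omega⟩
    · rintro ⟨h0, ⟨a, ha⟩, h2⟩; exact hpar ⟨a + 1, by omega⟩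
    · rintro ⟨h0, ⟨a, ha⟩, h2⟩; exact hpar ⟨a, by omega⟩
  case pos =>
    obtain ⟨a, ha⟩ := hpar
    by_cases hy : |y| ≤ t
    case neg =>
      rw [abs_le, not_and_or] at hy
      rw [if_neg, if_neg, if_neg]
      · norm_num
      · rw [not_and]; intro _; rw [not_and]; intro _; rw [abs_le]; omega
      · rw [not_and]; intro _; rw [not_and]; intro _; rw [abs_le]; omega
      · rw [not_and]; intro _; rw [not_and]; intro _; rw [abs_le]; omega
    case pos =>
      rw [abs_le] at hy
      rw [if_pos ⟨by omega, ⟨a, ha⟩, abs_le.2 hy⟩]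
      by_cases hyt : y = t
      · -- y = t : right term vanishes
        rw [if_pos, if_neg]
        · have e1 : ((t - 1 + (y - 1)) / 2).toNat = (t-1).toNat := by omega
          have e2 : ((t + y) / 2).toNat = t.toNat := by omega
          rw [e1, e2, Nat.choose_self, Nat.choose_self, two_zpow_shift]
          ring
        · rw [not_and]; intro _; rw [not_and]; intro _; rw [abs_le]; omega
        · exact ⟨by omega, ⟨a, by omega⟩, abs_le.2 (by omega)⟩
      by_cases hyt' : y = -t
      · rw [if_neg, if_pos]
        · have e1 : ((t - 1 + (y + 1)) / 2).toNat = 0 := by omega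
          have e2 : ((t + y) / 2).toNat = 0 := by omega
          rw [e1, e2, Nat.choose_zero_right, Nat.choose_zero_right, two_zpow_shift]
          ring
        · exact ⟨by omega, ⟨a - 1, by omega⟩, abs_le.2 (by omega)⟩
        · rw [not_and]; intro _; rw [not_and]; intro _; rw [abs_le]; omega
      · -- interior case
        rw [if_pos ⟨by omega, ⟨a, by omega⟩, abs_le.2 (by omega)⟩,
            if_pos ⟨by omega, ⟨a - 1, by omega⟩, abs_le.2 (by omega)⟩]
        have e1 : t.toNat = (t-1).toNat + 1 := by omega
        have e2 : ((t + y) / 2).toNat = ((t - 1 + (y - 1)) / 2).toNat + 1 := by omega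
        have e3 : ((t - 1 + (y + 1)) / 2).toNat = ((t - 1 + (y - 1)) / 2).toNat + 1 := by omega
        rw [e1, e2, e3, Nat.choose_succ_succ, two_zpow_shift]
        push_cast
        ring

lemma cb_sq (m : ℕ) : (Nat.centralBinom m) ^ 2 * (2 * m + 1) ≤ 16 ^ m := by
  induction m with
  | zero => simp [Nat.centralBinom]
  | succ n ih =>
    have key : (n + 1) * Nat.centralBinom (n + 1) = 2 * (2 * n + 1) * Nat.centralBinom n :=
      Nat.succ_mul_centralBinom_succ n
    have h1 : ((n+1) * Nat.centralBinom (n+1)) ^ 2 * (2 * (n+1) + 1)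
        = 4 * (2*n+1) ^ 2 * (2*n+3) * (Nat.centralBinom n) ^ 2 := by
      rw [key]; ring
    have h2 : 4 * (2*n+1) ^ 2 * (2*n+3) * (Nat.centralBinom n) ^ 2
        ≤ 4 * (2*n+1) * (2*n+3) * 16 ^ n := by
      calc 4 * (2*n+1) ^ 2 * (2*n+3) * (Nat.centralBinom n) ^ 2
          = 4 * (2*n+1) * (2*n+3) * ((Nat.centralBinom n) ^ 2 * (2*n+1)) := by ring
        _ ≤ 4 * (2*n+1) * (2*n+3) * 16 ^ n := Nat.mul_le_mul_left _ ih
    have h3 : 4 * (2*n+1) * (2*n+3) * 16 ^ n ≤ (n+1)^2 * 16 ^ (n+1) := by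
      have : 4 * (2*n+1) * (2*n+3) ≤ (n+1)^2 * 16 := by nlinarith
      calc 4 * (2*n+1) * (2*n+3) * 16 ^ n ≤ (n+1)^2 * 16 * 16 ^ n :=
            Nat.mul_le_mul_right _ this
        _ = (n+1)^2 * 16 ^ (n+1) := by ring
    have h4 : (n+1)^2 * ((Nat.centralBinom (n+1)) ^ 2 * (2 * (n+1) + 1))
        ≤ (n+1)^2 * 16 ^ (n+1) := by
      calc (n+1)^2 * ((Nat.centralBinom (n+1)) ^ 2 * (2 * (n+1) + 1))
          = ((n+1) * Nat.centralBinom (n+1)) ^ 2 * (2 * (n+1) + 1) := by ring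
        _ = 4 * (2*n+1) ^ 2 * (2*n+3) * (Nat.centralBinom n) ^ 2 := h1
        _ ≤ 4 * (2*n+1) * (2*n+3) * 16 ^ n := h2
        _ ≤ (n+1)^2 * 16 ^ (n+1) := h3
    exact Nat.le_of_mul_le_mul_left h4 (by positivity)

noncomputable def b (m : ℕ) : ℝ := (Nat.centralBinom m : ℝ) / 4 ^ m

lemma b_nonneg (m : ℕ) : 0 ≤ b m := by unfold b; positivity

lemma b_le (m : ℕ) : b m ≤ Real.sqrt (1 / (2 * m + 1)) := by
  have h4 : (0:ℝ) < 4 ^ m := by positivity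
  have hb : b m = Real.sqrt ((b m) ^ 2) := by
    rw [Real.sqrt_sq (b_nonneg m)]
  rw [hb]
  apply Real.sqrt_le_sqrt
  unfold b
  rw [div_pow, div_le_div_iff₀ (by positivity) (by positivity)]
  have := cb_sq m
  have hcast : ((Nat.centralBinom m) ^ 2 * (2 * m + 1) : ℝ) ≤ (16 : ℝ) ^ m := by
    exact_mod_cast this
  calc ((Nat.centralBinom m : ℝ)) ^ 2 * (2 * ↑m + 1) ≤ (16:ℝ) ^ m := by push_cast at hcast ⊢; linarith
    _ = 1 * ((4:ℝ) ^ m) ^ 2 := by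
          rw [one_mul, ← pow_mul, mul_comm m 2, pow_mul]; norm_num
  
lemma b_tendsto : Filter.Tendsto b Filter.atTop (nhds 0) := by
  apply squeeze_zero b_nonneg b_le
  have h1 : Filter.Tendsto (fun m : ℕ => 1 / (2 * (m:ℝ) + 1)) Filter.atTop (nhds 0) := by
    apply Filter.Tendsto.comp tendsto_inv_atTop_zero (f := fun m : ℕ => 2 * (m:ℝ) + 1) ?_ |>.congr
    · intro m; simp [one_div]
    · apply Filter.tendsto_atTop_add_const_right
      exact (tendsto_natCast_atTop_atTop).const_mul_atTop (by norm_num)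
  have h2 := (Real.continuous_sqrt.tendsto 0).comp h1
  rw [Real.sqrt_zero] at h2
  exact h2.congr (fun m => by simp [Function.comp])

noncomputable def c (n : ℕ) : ℝ := (2:ℝ) ^ (-(n:ℤ)) * (n.choose (n / 2))

lemma c_nonneg (n : ℕ) : 0 ≤ c n := by unfold c; positivity

lemma H_le_c (y : ℤ) (n : ℕ) : H y (n : ℤ) ≤ c n := by
  unfold H
  split_ifs with h
  · unfold c
    have ht : (n : ℤ).toNat = n := Int.toNat_natCast n
    rw [ht]
    have := Nat.choose_le_middle ((((n:ℤ) + y) / 2).toNat) n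
    have hc : ((n.choose ((((n:ℤ) + y) / 2).toNat)) : ℝ) ≤ (n.choose (n / 2) : ℝ) := by
      exact_mod_cast this
    have hp : (0:ℝ) < (2:ℝ) ^ (-(n:ℤ)) := by positivity
    nlinarith
  · exact c_nonneg n

lemma c_le_b (n : ℕ) : c n ≤ b (n / 2) := by
  rcases Nat.even_or_odd n with ⟨m, hm⟩ | ⟨m, hm⟩
  · subst hm
    have h2 : (m + m) / 2 = m := by omega
    unfold c b
    rw [h2]
    have : (2:ℝ) ^ (-((m+m : ℕ):ℤ)) = ((4:ℝ) ^ m)⁻¹ := by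
      rw [zpow_neg, zpow_natCast, pow_add, ← mul_pow]; norm_num
    rw [this, Nat.centralBinom]
    rw [show m + m = 2 * m by ring]
    rw [div_eq_mul_inv, mul_comm]
  · subst hm
    have h2 : (2 * m + 1) / 2 = m := by omega
    unfold c b
    rw [h2]
    -- C(2m+1, m) ≤ 2 * C(2m, m)
    have hkey : (2 * m + 1).choose m ≤ 2 * Nat.centralBinom m := by
      rcases Nat.eq_zero_or_pos m with h0 | h0
      · subst h0; simp [Nat.centralBinom]
      · have h1 : m - 1 + 1 = m := by omega
        have hps : (2 * m + 1).choose m = (2*m).choose (m-1) + (2*m).choose m := by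
          calc (2*m+1).choose m = ((2*m)+1).choose ((m-1)+1) := by rw [h1]
            _ = (2*m).choose (m-1) + (2*m).choose ((m-1)+1) := Nat.choose_succ_succ _ _
            _ = (2*m).choose (m-1) + (2*m).choose m := by rw [h1]
        have hmid : (2*m).choose (m-1) ≤ (2*m).choose ((2*m)/2) := Nat.choose_le_middle _ _
        have hm2 : (2*m)/2 = m := by omega
        rw [hm2] at hmid
        unfold Nat.centralBinom
        omega
    have hc : (((2 * m + 1).choose m : ℕ) : ℝ) ≤ 2 * (Nat.centralBinom m : ℝ) := by
      exact_mod_cast hkey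
    have hpow : (2:ℝ) ^ (-((2*m+1 : ℕ):ℤ)) = ((4:ℝ) ^ m)⁻¹ / 2 := by
      rw [zpow_neg, zpow_natCast, pow_succ, pow_mul]
      norm_num
      ring
    rw [hpow]
    have h4 : (0:ℝ) < (4:ℝ) ^ m := by positivity
    rw [div_eq_mul_inv (_ : ℝ)]
    calc ((4:ℝ) ^ m)⁻¹ / 2 * ((2 * m + 1).choose m : ℝ)
        ≤ ((4:ℝ) ^ m)⁻¹ / 2 * (2 * (Nat.centralBinom m : ℝ)) := by
          apply mul_le_mul_of_nonneg_left hc; positivity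
      _ = (Nat.centralBinom m : ℝ) * ((4:ℝ) ^ m)⁻¹ := by ring

lemma c_tendsto : Filter.Tendsto c Filter.atTop (nhds 0) := by
  apply squeeze_zero c_nonneg c_le_b
  apply b_tendsto.comp
  apply Filter.tendsto_atTop_atTop.2
  intro k
  exact ⟨2 * k, fun a ha => by omega⟩

noncomputable def g (x : ℤ) (n : ℕ) : ℝ := ∑ y ∈ Finset.Icc (-x) (x-1), H y (n : ℤ)

lemma g_nonneg (x : ℤ) (n : ℕ) : 0 ≤ g x n :=
  Finset.sum_nonneg fun y _ => H_nonneg y n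

lemma H_zero (y : ℤ) : H y 0 = if y = 0 then 1 else 0 := by
  unfold H
  split_ifs with h1 h2 h2
  · subst h2; norm_num
  · exfalso; obtain ⟨_, _, h3⟩ := h1; rw [abs_le] at h3; omega
  · exact absurd ⟨le_refl 0, ⟨0, by omega⟩, by subst h2; simp⟩ h1
  · rfl

lemma g_zero (x : ℤ) (hx : 1 ≤ x) : g x 0 = 1 := by
  unfold g
  rw [show ((0:ℕ):ℤ) = 0 from rfl]
  rw [Finset.sum_congr rfl (fun y _ => H_zero y)]
  rw [Finset.sum_ite_eq' (Finset.Icc (-x) (x-1)) 0 (fun _ => (1:ℝ))]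
  rw [if_pos (by rw [Finset.mem_Icc]; omega)]

lemma sum_shift (a b d : ℤ) (f : ℤ → ℝ) :
    ∑ y ∈ Finset.Icc (a+d) (b+d), f y = ∑ y ∈ Finset.Icc a b, f (y+d) := by
  rw [← Finset.map_add_right_Icc, Finset.sum_map]
  rfl

lemma sum_Icc_expand (x : ℤ) (hx : 1 ≤ x) (f : ℤ → ℝ) :
    ∑ y ∈ Finset.Icc (-x-1) (x-2), f y
      = f (-x-1) - f (x-1) + ∑ y ∈ Finset.Icc (-x) (x-1), f y := by
  have h1 : Finset.Icc (-x-1) (x-1) = insert (x-1) (Finset.Icc (-x-1) (x-2)) := by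
    ext z; simp [Finset.mem_Icc]; omega
  have h2 : Finset.Icc (-x-1) (x-1) = insert (-x-1) (Finset.Icc (-x) (x-1)) := by
    ext z; simp [Finset.mem_Icc]; omega
  have m1 : (x-1) ∉ Finset.Icc (-x-1) (x-2) := by rw [Finset.mem_Icc]; omega
  have m2 : (-x-1) ∉ Finset.Icc (-x) (x-1) := by rw [Finset.mem_Icc]; omega
  have e1 : ∑ y ∈ Finset.Icc (-x-1) (x-1), f y
      = f (x-1) + ∑ y ∈ Finset.Icc (-x-1) (x-2), f y := by rw [h1, Finset.sum_insert m1]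
  have e2 : ∑ y ∈ Finset.Icc (-x-1) (x-1), f y
      = f (-x-1) + ∑ y ∈ Finset.Icc (-x) (x-1), f y := by rw [h2, Finset.sum_insert m2]
  linarith

lemma g_succ (x : ℤ) (hx : 1 ≤ x) (n : ℕ) :
    g x (n+1) = g x n - (H (x-1) (n:ℤ) - H (x+1) (n:ℤ)) / 2 := by
  have hcast : ((n+1 : ℕ) : ℤ) - 1 = (n : ℤ) := by push_cast; ring
  have step : ∀ y : ℤ, H y ((n+1 : ℕ) : ℤ) = (H (y-1) (n:ℤ) + H (y+1) (n:ℤ)) / 2 := by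
    intro y
    rw [H_rec y ((n+1:ℕ):ℤ) (by push_cast; omega), hcast]
  unfold g
  rw [Finset.sum_congr rfl (fun y _ => step y)]
  rw [← Finset.sum_div]
  rw [Finset.sum_add_distrib]
  have hA : ∑ y ∈ Finset.Icc (-x) (x-1), H (y-1) (n:ℤ)
      = H (x+1) (n:ℤ) - H (x-1) (n:ℤ) + ∑ y ∈ Finset.Icc (-x) (x-1), H y (n:ℤ) := by
    have hs := sum_shift (-x) (x-1) (-1) (fun y => H y (n:ℤ))
    rw [show -x + -1 = -x-1 by ring, show x-1 + -1 = x-2 by ring] at hs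
    have h2 : ∑ y ∈ Finset.Icc (-x) (x-1), H (y-1) (n:ℤ)
        = ∑ y ∈ Finset.Icc (-x-1) (x-2), H y (n:ℤ) := by
      rw [hs]
      apply Finset.sum_congr rfl
      intro y _
      congr 1 <;> ring
    rw [h2, sum_Icc_expand x hx (fun y => H y (n:ℤ))]
    rw [show -x-1 = -(x+1) by ring, H_symm (x+1) (n:ℤ)]
  have hB : ∑ y ∈ Finset.Icc (-x) (x-1), H (y+1) (n:ℤ)
      = ∑ y ∈ Finset.Icc (-x) (x-1), H y (n:ℤ) := by
    have hs := sum_shift (-x) (x-1) 1 (fun y => H y (n:ℤ))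
    rw [show x-1+1 = x by ring] at hs
    have h2 : ∑ y ∈ Finset.Icc (-x) (x-1), H (y+1) (n:ℤ)
        = ∑ y ∈ Finset.Icc (-x+1) x, H y (n:ℤ) := hs.symm
    rw [h2]
    have h3 : Finset.Icc (-x+1) x = insert x ((Finset.Icc (-x) (x-1)).erase (-x)) := by
      ext z; simp [Finset.mem_Icc]; omega
    have h4 : Finset.Icc (-x) (x-1) = insert (-x) ((Finset.Icc (-x) (x-1)).erase (-x)) := by
      rw [Finset.insert_erase]; rw [Finset.mem_Icc]; omega
    rw [h3]
    conv_rhs => rw [h4]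
    rw [Finset.sum_insert (fun hmem => by rw [Finset.mem_erase, Finset.mem_Icc] at hmem; omega),
        Finset.sum_insert (Finset.notMem_erase _ _)]
    rw [H_symm x (n:ℤ)]
  rw [hA, hB]
  ring

lemma H_eq_zero_of_not (y t : ℤ) (h : ¬(0 ≤ t ∧ (2:ℤ) ∣ (t - y) ∧ |y| ≤ t)) : H y t = 0 := by
  unfold H; rw [if_neg h]

lemma H_anti (x : ℤ) (hx : 1 ≤ x) (t : ℤ) : H (x+1) t ≤ H (x-1) t := by
  by_cases h : 0 ≤ t ∧ (2:ℤ) ∣ (t - (x+1)) ∧ |x+1| ≤ t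
  · obtain ⟨ht, ⟨a, ha⟩, habs⟩ := h
    rw [abs_le] at habs
    unfold H
    rw [if_pos ⟨ht, ⟨a, ha⟩, abs_le.2 habs⟩,
        if_pos ⟨ht, ⟨a+1, by omega⟩, abs_le.2 (by omega)⟩]
    have hk : ((t + (x+1))/2).toNat = ((t + (x-1))/2).toNat + 1 := by omega
    rw [hk]
    have hle : t.toNat.choose (((t + (x-1))/2).toNat + 1)
        ≤ t.toNat.choose (((t + (x-1))/2).toNat) := by
      have h2 := Nat.choose_succ_right_eq t.toNat (((t + (x-1))/2).toNat)
      have h3 : t.toNat - ((t+(x-1))/2).toNat ≤ ((t+(x-1))/2).toNat + 1 := by omega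
      have h4 : t.toNat.choose (((t + (x-1))/2).toNat + 1) * (((t + (x-1))/2).toNat + 1)
          ≤ t.toNat.choose (((t + (x-1))/2).toNat) * (((t + (x-1))/2).toNat + 1) := by
        rw [h2]
        exact Nat.mul_le_mul_left _ h3
      exact Nat.le_of_mul_le_mul_right h4 (by omega)
    exact mul_le_mul_of_nonneg_left (Nat.cast_le.2 hle) (by positivity)
  · rw [H_eq_zero_of_not (x+1) t h]
    exact H_nonneg _ _

lemma INF_eq (x : ℤ) (n : ℕ) :
    INF x ((n:ℤ)+1) = (H (x+1) (n:ℤ) - H (x-1) (n:ℤ)) / 2 := by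
  unfold INF
  rw [if_neg (by omega : ¬ (n:ℤ)+1 ≤ 0)]
  rw [show (n:ℤ)+1-1 = (n:ℤ) by ring]
  rw [H_rec x ((n:ℤ)+1) (by omega)]
  rw [show (n:ℤ)+1-1 = (n:ℤ) by ring]
  ring

lemma INF_abs (x : ℤ) (hx : 1 ≤ x) (n : ℕ) :
    |INF x ((n:ℤ)+1)| = (H (x-1) (n:ℤ) - H (x+1) (n:ℤ)) / 2 := by
  rw [INF_eq]
  have := H_anti x hx (n:ℤ)
  rw [abs_of_nonpos (by linarith)]
  ring

lemma g_tendsto (x : ℤ) (hx : 1 ≤ x) :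
    Filter.Tendsto (g x) Filter.atTop (nhds 0) := by
  apply squeeze_zero (g_nonneg x)
    (g := fun n => ((Finset.Icc (-x) (x-1)).card : ℝ) * c n)
  · intro n
    unfold g
    calc ∑ y ∈ Finset.Icc (-x) (x-1), H y (n:ℤ)
        ≤ ∑ _y ∈ Finset.Icc (-x) (x-1), c n :=
          Finset.sum_le_sum (fun y _ => H_le_c y n)
      _ = ((Finset.Icc (-x) (x-1)).card : ℝ) * c n := by
          rw [Finset.sum_const, nsmul_eq_mul]
  · have := c_tendsto.const_mul ((Finset.Icc (-x) (x-1)).card : ℝ)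
    simpa using this

lemma main_pos (x : ℤ) (hx : 1 ≤ x) :
    HasSum (fun t : ℕ => |INF x ((t : ℤ) + 1)|) 1 := by
  rw [hasSum_iff_tendsto_nat_of_nonneg (fun i => abs_nonneg _)]
  have hps : ∀ n, ∑ t ∈ Finset.range n, |INF x ((t:ℤ)+1)| = 1 - g x n := by
    intro n
    have hterm : ∀ t : ℕ, |INF x ((t:ℤ)+1)| = g x t - g x (t+1) := by
      intro t; rw [INF_abs x hx t, g_succ x hx t]; ring
    rw [Finset.sum_congr rfl (fun t _ => hterm t), Finset.sum_range_sub' (g x) n,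
        g_zero x hx]
  have : Filter.Tendsto (fun n => 1 - g x n) Filter.atTop (nhds 1) := by
    have := (tendsto_const_nhds (x := (1:ℝ)) (f := Filter.atTop (α := ℕ))).sub (g_tendsto x hx)
    simpa using this
  exact this.congr (fun n => (hps n).symm)

lemma aux_inf_abs_time_sum_eq_one (x : ℤ) (hx : x ≠ 0) :
    HasSum (fun t : ℕ => |INF x ((t : ℤ) + 1)|) 1 := by
  rcases lt_or_gt_of_ne hx with hneg | hpos
  · have hx' : 1 ≤ -x := by omega
    have key : ∀ t : ℕ, |INF x ((t:ℤ)+1)| = |INF (-x) ((t:ℤ)+1)| := by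
      intro t
      rw [INF_eq x t, INF_eq (-x) t]
      rw [show -x + 1 = -(x-1) by ring, show -x - 1 = -(x+1) by ring,
        H_symm (x-1) (t:ℤ), H_symm (x+1) (t:ℤ)]
      rw [show (H (x-1) (t:ℤ) - H (x+1) (t:ℤ))/2 = -((H (x+1) (t:ℤ) - H (x-1) (t:ℤ))/2) by ring,
        abs_neg]
    have hfun : (fun t : ℕ => |INF x ((t:ℤ)+1)|) = fun t : ℕ => |INF (-x) ((t:ℤ)+1)| :=
      funext key
    rw [hfun]
    exact main_pos (-x) hx'
  · exact main_pos x (by omega)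

theorem inf_abs_time_sum_eq_one (x : ℤ) (hx : x ≠ 0) :
    HasSum (fun t : ℕ => |INF x ((t : ℤ) + 1)|) 1 := by
  exact aux_inf_abs_time_sum_eq_one x hx
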